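/- arXiv:2002.06396 — 8 statements merged into one kernel-verified Lean document; each statement's English description precedes it below -/
import Mathlib

section
/- Let φ₁, …, φ_m be vectors in ℝ² each lying in the open first quadrant, i.e. φ_i = (a_i, b_i) with a_i > 0 and b_i > 0 for every i. Then for any choice of positive scalars c₁, …, c_m, the scaled family {c_i φ_i} is not a tight frame; that is, there is no constant A such that Σ_{i=1}^m ⟨φ, c_i φ_i⟩² = A‖φ‖² for all φ ∈ ℝ². In particular, a family lying in an open quadrant is not scalable. -/
open scoped BigOperators

/-- A family of vectors lying in the open first quadrant of ℝ² is not scalable: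
no positive scaling of the vectors forms a tight frame. -/
theorem stmt_0 (m : ℕ) (hm : 0 < m) (φ : Fin m → ℝ × ℝ)
    (hquad : ∀ i, 0 < (φ i).1 ∧ 0 < (φ i).2)
    (c : Fin m → ℝ) (hc : ∀ i, 0 < c i) :
    ¬ ∃ A : ℝ, ∀ v : ℝ × ℝ,
      ∑ i, (v.1 * (c i * (φ i).1) + v.2 * (c i * (φ i).2)) ^ 2
        = A * (v.1 ^ 2 + v.2 ^ 2) := by
  rintro ⟨A, hA⟩
  have h1 := hA (1, 1)
  have h2 := hA (1, -1)
  simp only at h1 h2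
  have key : ∑ i, (4 * (c i) ^ 2 * (φ i).1 * (φ i).2) = 0 := by
    norm_num at h1 h2
    have := sub_eq_zero_of_eq (h1.trans h2.symm)
    rw [← Finset.sum_sub_distrib] at this
    rw [← this]
    apply Finset.sum_congr rfl
    intro i _
    ring
  have hpos : ∀ i ∈ Finset.univ, 0 < 4 * (c i) ^ 2 * (φ i).1 * (φ i).2 := by
    intro i _
    obtain ⟨ha, hb⟩ := hquad i
    have hci := hc i
    positivity
  have := Finset.sum_pos hpos ⟨⟨0, hm⟩, Finset.mem_univ _⟩
  linarith
end

section
/- Let S₁ and S₂ be positive self-adjoint invertible linear operators on ℝⁿ (frame operators of two scalings of a frame). Let A₁ ≤ B₁ be the smallest and largest eigenvalues of S₁ and A₂ ≤ B₂ those of S₂, and suppose (A₁ + B₁)/2 = (A₂ + B₂)/2 = 1. Then B₁/A₁ ≤ B₂/A₂ if and only if ‖S₁ − Id‖ ≤ ‖S₂ − Id‖, where ‖·‖ is the operator norm. In other words, among normalized scalings, minimizing the condition number B/A is equivalent to minimizing the frame operator's distance from the identity. -/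
open scoped RealInnerProductSpace


lemma aux_norm_le {E : Type*} [NormedAddCommGroup E] [InnerProductSpace ℝ E] [CompleteSpace E]
    (T : E →L[ℝ] E) (hT : IsSelfAdjoint T) {c : ℝ} (hc : 0 ≤ c)
    (h : ∀ x, |⟪T x, x⟫| ≤ c * ‖x‖ ^ 2) : ‖T‖ ≤ c := by
  refine T.opNorm_le_bound hc fun x => ?_
  rcases eq_or_ne x 0 with rfl | hx
  · simp
  by_cases hTx : T x = 0
  · rw [hTx]; simp; positivity
  have hTxn : (0:ℝ) < ‖T x‖ := norm_pos_iff.mpr hTx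
  have hxn : (0:ℝ) < ‖x‖ := norm_pos_iff.mpr hx
  set y := (‖x‖ / ‖T x‖) • T x with hy
  have hyn : ‖y‖ = ‖x‖ := by
    rw [hy, norm_smul, Real.norm_eq_abs, abs_of_nonneg (by positivity)]
    field_simp
  have hsym : ∀ u v : E, ⟪T u, v⟫ = ⟪T v, u⟫ := fun u v => by
    exact (hT.isSymmetric u v).trans (real_inner_comm (T v) u)
  have key : 4 * ⟪T x, y⟫ = ⟪T (x+y), x+y⟫ - ⟪T (x-y), x-y⟫ := by
    simp only [map_add, map_sub, inner_add_left, inner_add_right, inner_sub_left,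
      inner_sub_right, hsym x y]
    ring
  have hval : ⟪T x, y⟫ = ‖x‖ * ‖T x‖ := by
    rw [hy, real_inner_smul_right, real_inner_self_eq_norm_sq]
    field_simp
  have h1 := h (x + y)
  have h2 := h (x - y)
  have hpar : ‖x + y‖ ^ 2 + ‖x - y‖ ^ 2 = 2 * (‖x‖ ^ 2 + ‖y‖ ^ 2) := by
    have := parallelogram_law_with_norm ℝ x y
    nlinarith [this]
  rw [hyn] at hpar
  have h3 : c * ‖x + y‖ ^ 2 + c * ‖x - y‖ ^ 2 = 4 * (c * ‖x‖ ^ 2) := by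
    linear_combination c * hpar
  have hineq : 4 * (‖x‖ * ‖T x‖) ≤ 4 * (c * ‖x‖ ^ 2) := by
    rw [← hval]
    linarith [(abs_le.mp h1).2, (abs_le.mp h2).1, key, h3]
  nlinarith [hineq, hxn]

lemma aux_rayleigh {n : ℕ} (S : EuclideanSpace ℝ (Fin n) →L[ℝ] EuclideanSpace ℝ (Fin n))
    (hsa : IsSelfAdjoint S) (A B : ℝ)
    (hA : Module.End.HasEigenvalue
      (S : EuclideanSpace ℝ (Fin n) →ₗ[ℝ] EuclideanSpace ℝ (Fin n)) A)
    (hbd : ∀ μ : ℝ, Module.End.HasEigenvalue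
      (S : EuclideanSpace ℝ (Fin n) →ₗ[ℝ] EuclideanSpace ℝ (Fin n)) μ → A ≤ μ ∧ μ ≤ B)
    (x : EuclideanSpace ℝ (Fin n)) :
    A * ‖x‖ ^ 2 ≤ ⟪S x, x⟫ ∧ ⟪S x, x⟫ ≤ B * ‖x‖ ^ 2 := by
  obtain ⟨v, hv⟩ := hA.exists_hasEigenvector
  haveI : Nontrivial (EuclideanSpace ℝ (Fin n)) := nontrivial_of_ne _ _ hv.2
  have hsym : (S : EuclideanSpace ℝ (Fin n) →ₗ[ℝ] EuclideanSpace ℝ (Fin n)).IsSymmetric :=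
    hsa.isSymmetric
  rcases eq_or_ne x 0 with rfl | hx
  · simp
  set f : {x : EuclideanSpace ℝ (Fin n) // x ≠ 0} → ℝ :=
    fun x => RCLike.re ⟪(S : EuclideanSpace ℝ (Fin n) →ₗ[ℝ] EuclideanSpace ℝ (Fin n)) x, x⟫
      / ‖(x : EuclideanSpace ℝ (Fin n))‖ ^ 2 with hf
  have habs : ∀ z : {x : EuclideanSpace ℝ (Fin n) // x ≠ 0}, |f z| ≤ ‖S‖ := by
    intro z
    have hz : (0:ℝ) < ‖(z : EuclideanSpace ℝ (Fin n))‖ := norm_pos_iff.mpr z.2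
    have h1 : |⟪S (z : EuclideanSpace ℝ (Fin n)), z⟫| ≤ ‖S‖ * ‖(z:EuclideanSpace ℝ (Fin n))‖ ^ 2 := by
      calc |⟪S (z : EuclideanSpace ℝ (Fin n)), z⟫| ≤ ‖S (z:EuclideanSpace ℝ (Fin n))‖ * ‖(z:EuclideanSpace ℝ (Fin n))‖ :=
            abs_real_inner_le_norm _ _
        _ ≤ ‖S‖ * ‖(z:EuclideanSpace ℝ (Fin n))‖ * ‖(z:EuclideanSpace ℝ (Fin n))‖ := by
            have := S.le_opNorm (z : EuclideanSpace ℝ (Fin n))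
            nlinarith [norm_nonneg (z : EuclideanSpace ℝ (Fin n))]
        _ = ‖S‖ * ‖(z:EuclideanSpace ℝ (Fin n))‖ ^ 2 := by ring
    have : f z = ⟪S (z : EuclideanSpace ℝ (Fin n)), z⟫ / ‖(z:EuclideanSpace ℝ (Fin n))‖ ^ 2 := rfl
    rw [this, abs_div, abs_of_nonneg (by positivity : (0:ℝ) ≤ ‖(z:EuclideanSpace ℝ (Fin n))‖ ^ 2)]
    rw [div_le_iff₀ (by positivity)]
    nlinarith
  have hbddA : BddAbove (Set.range f) := ⟨‖S‖, by rintro _ ⟨z, rfl⟩; exact (abs_le.mp (habs z)).2⟩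
  have hbddB : BddBelow (Set.range f) := ⟨-‖S‖, by rintro _ ⟨z, rfl⟩; exact (abs_le.mp (habs z)).1⟩
  have hsup := hsym.hasEigenvalue_iSup_of_finiteDimensional
  have hinf := hsym.hasEigenvalue_iInf_of_finiteDimensional
  have hs := hbd _ hsup
  have hi := hbd _ hinf
  have hxmem : f ⟨x, hx⟩ ≤ ⨆ z, f z := le_ciSup hbddA ⟨x, hx⟩
  have hxmem' : ⨅ z, f z ≤ f ⟨x, hx⟩ := ciInf_le hbddB ⟨x, hx⟩
  have hfx : f ⟨x, hx⟩ = ⟪S x, x⟫ / ‖x‖ ^ 2 := rfl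
  have hxn : (0:ℝ) < ‖x‖ ^ 2 := pow_pos (norm_pos_iff.mpr hx) 2
  constructor
  · have : A ≤ ⟪S x, x⟫ / ‖x‖ ^ 2 := le_trans (le_trans hi.1 hxmem') (le_of_eq hfx)
    rw [le_div_iff₀ hxn] at this
    linarith
  · have : ⟪S x, x⟫ / ‖x‖ ^ 2 ≤ B := le_trans (le_of_eq hfx.symm) (le_trans hxmem hs.2)
    rw [div_le_iff₀ hxn] at this
    linarith

lemma aux_norm_eq {n : ℕ} (S : EuclideanSpace ℝ (Fin n) →L[ℝ] EuclideanSpace ℝ (Fin n))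
    (hsa : IsSelfAdjoint S) (A B : ℝ)
    (hA : Module.End.HasEigenvalue
      (S : EuclideanSpace ℝ (Fin n) →ₗ[ℝ] EuclideanSpace ℝ (Fin n)) A)
    (hB : Module.End.HasEigenvalue
      (S : EuclideanSpace ℝ (Fin n) →ₗ[ℝ] EuclideanSpace ℝ (Fin n)) B)
    (hbd : ∀ μ : ℝ, Module.End.HasEigenvalue
      (S : EuclideanSpace ℝ (Fin n) →ₗ[ℝ] EuclideanSpace ℝ (Fin n)) μ → A ≤ μ ∧ μ ≤ B)
    (hmid : (A + B) / 2 = 1) :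
    ‖S - ContinuousLinearMap.id ℝ (EuclideanSpace ℝ (Fin n))‖ = (B - A) / 2 := by
  have hAB : A ≤ B := (hbd A hA).2
  have hc : (0:ℝ) ≤ (B - A) / 2 := by linarith
  have hid : IsSelfAdjoint (S - ContinuousLinearMap.id ℝ (EuclideanSpace ℝ (Fin n))) := by
    rw [IsSelfAdjoint, ContinuousLinearMap.star_eq_adjoint, map_sub, hsa.adjoint_eq,
      ContinuousLinearMap.adjoint_id]
  apply le_antisymm
  · apply aux_norm_le _ hid hc
    intro x
    have hb := aux_rayleigh S hsa A B hA hbd x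
    have : ⟪(S - ContinuousLinearMap.id ℝ (EuclideanSpace ℝ (Fin n))) x, x⟫
        = ⟪S x, x⟫ - ‖x‖ ^ 2 := by
      rw [ContinuousLinearMap.sub_apply, inner_sub_left, ContinuousLinearMap.id_apply,
        real_inner_self_eq_norm_sq]
    rw [this, abs_le]
    constructor <;> nlinarith
  · obtain ⟨v, hv⟩ := hB.exists_hasEigenvector
    have hvn : (0:ℝ) < ‖v‖ := norm_pos_iff.mpr hv.2
    have happ : (S - ContinuousLinearMap.id ℝ (EuclideanSpace ℝ (Fin n))) v = (B - 1) • v := by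
      have := hv.apply_eq_smul
      simp only [ContinuousLinearMap.coe_coe] at this
      simp [ContinuousLinearMap.sub_apply, this, sub_smul]
    have h1 : ‖(S - ContinuousLinearMap.id ℝ (EuclideanSpace ℝ (Fin n))) v‖
        ≤ ‖S - ContinuousLinearMap.id ℝ (EuclideanSpace ℝ (Fin n))‖ * ‖v‖ :=
      ContinuousLinearMap.le_opNorm _ _
    rw [happ, norm_smul, Real.norm_eq_abs, abs_of_nonneg (by linarith : (0:ℝ) ≤ B - 1)] at h1
    have : B - 1 ≤ ‖S - ContinuousLinearMap.id ℝ (EuclideanSpace ℝ (Fin n))‖ :=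
      le_of_mul_le_mul_right h1 hvn
    linarith

/-- For two normalized frame-operator-like positive self-adjoint invertible operators S₁, S₂
on ℝⁿ with extreme eigenvalues A₁ ≤ B₁ and A₂ ≤ B₂ satisfying (Aᵢ+Bᵢ)/2 = 1, the condition
numbers compare exactly as the distances of the operators from the identity. -/
theorem stmt_3 (n : ℕ)
    (S₁ S₂ : EuclideanSpace ℝ (Fin n) →L[ℝ] EuclideanSpace ℝ (Fin n))
    (hsa₁ : IsSelfAdjoint S₁) (hsa₂ : IsSelfAdjoint S₂)
    (hpos₁ : ∀ x, 0 ≤ ⟪S₁ x, x⟫) (hpos₂ : ∀ x, 0 ≤ ⟪S₂ x, x⟫)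
    (A₁ B₁ A₂ B₂ : ℝ) (hA₁pos : 0 < A₁) (hA₂pos : 0 < A₂)
    (hA₁ : Module.End.HasEigenvalue
      (S₁ : EuclideanSpace ℝ (Fin n) →ₗ[ℝ] EuclideanSpace ℝ (Fin n)) A₁)
    (hB₁ : Module.End.HasEigenvalue
      (S₁ : EuclideanSpace ℝ (Fin n) →ₗ[ℝ] EuclideanSpace ℝ (Fin n)) B₁)
    (hbd₁ : ∀ μ : ℝ, Module.End.HasEigenvalue
      (S₁ : EuclideanSpace ℝ (Fin n) →ₗ[ℝ] EuclideanSpace ℝ (Fin n)) μ → A₁ ≤ μ ∧ μ ≤ B₁)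
    (hA₂ : Module.End.HasEigenvalue
      (S₂ : EuclideanSpace ℝ (Fin n) →ₗ[ℝ] EuclideanSpace ℝ (Fin n)) A₂)
    (hB₂ : Module.End.HasEigenvalue
      (S₂ : EuclideanSpace ℝ (Fin n) →ₗ[ℝ] EuclideanSpace ℝ (Fin n)) B₂)
    (hbd₂ : ∀ μ : ℝ, Module.End.HasEigenvalue
      (S₂ : EuclideanSpace ℝ (Fin n) →ₗ[ℝ] EuclideanSpace ℝ (Fin n)) μ → A₂ ≤ μ ∧ μ ≤ B₂)
    (hmid₁ : (A₁ + B₁) / 2 = 1) (hmid₂ : (A₂ + B₂) / 2 = 1) :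
    B₁ / A₁ ≤ B₂ / A₂ ↔
      ‖S₁ - ContinuousLinearMap.id ℝ (EuclideanSpace ℝ (Fin n))‖ ≤
        ‖S₂ - ContinuousLinearMap.id ℝ (EuclideanSpace ℝ (Fin n))‖ := by
  have h1 := aux_norm_eq S₁ hsa₁ A₁ B₁ hA₁ hB₁ hbd₁ hmid₁
  have h2 := aux_norm_eq S₂ hsa₂ A₂ B₂ hA₂ hB₂ hbd₂ hmid₂
  rw [h1, h2, div_le_div_iff₀ hA₁pos hA₂pos]
  constructor <;> intro h <;> nlinarith
end

section
/- Fix a with 0 < a < 1 and define, for k ∈ (0, 1], f(k, a) = (k² + 1 + √((1 − k²)² + 4k²a²)) / (k² + 1 − √((1 − k²)² + 4k²a²)). Then f(k, a) is strictly decreasing in k on (0, 1]: for all 0 < k₁ < k₂ ≤ 1 one has f(k₂, a) < f(k₁, a). In particular, for the frame {(k,0), (a,b)} with a² + b² = 1, the condition number decreases as the norm k = ‖φ₁‖ increases toward 1 = ‖φ₂‖. -/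
/-- For fixed 0 < a < 1, the condition number
f(k, a) = (k² + 1 + √((1 − k²)² + 4k²a²)) / (k² + 1 − √((1 − k²)² + 4k²a²))
of the frame {(k,0), (a,b)} (a² + b² = 1) is strictly decreasing in k on (0, 1]. -/
theorem stmt_7 (a k₁ k₂ : ℝ) (ha0 : 0 < a) (ha1 : a < 1)
    (hk₁ : 0 < k₁) (h12 : k₁ < k₂) (hk₂ : k₂ ≤ 1) :
    (k₂ ^ 2 + 1 + Real.sqrt ((1 - k₂ ^ 2) ^ 2 + 4 * k₂ ^ 2 * a ^ 2)) /
      (k₂ ^ 2 + 1 - Real.sqrt ((1 - k₂ ^ 2) ^ 2 + 4 * k₂ ^ 2 * a ^ 2)) <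
    (k₁ ^ 2 + 1 + Real.sqrt ((1 - k₁ ^ 2) ^ 2 + 4 * k₁ ^ 2 * a ^ 2)) /
      (k₁ ^ 2 + 1 - Real.sqrt ((1 - k₁ ^ 2) ^ 2 + 4 * k₁ ^ 2 * a ^ 2)) := by
  set D₁ := (1 - k₁ ^ 2) ^ 2 + 4 * k₁ ^ 2 * a ^ 2 with hD₁
  set D₂ := (1 - k₂ ^ 2) ^ 2 + 4 * k₂ ^ 2 * a ^ 2 with hD₂
  set t₁ := k₁ ^ 2 + 1 with ht₁
  set t₂ := k₂ ^ 2 + 1 with ht₂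
  have hk₂0 : 0 < k₂ := hk₁.trans h12
  have ht₁0 : 0 < t₁ := by positivity
  have ht₂0 : 0 < t₂ := by positivity
  have hD₁0 : 0 ≤ D₁ := by positivity
  have hD₂0 : 0 ≤ D₂ := by positivity
  -- √D < t
  have hs₁ : Real.sqrt D₁ < t₁ := by
    rw [show (t₁ : ℝ) = Real.sqrt (t₁ ^ 2) by rw [Real.sqrt_sq ht₁0.le]]
    apply Real.sqrt_lt_sqrt hD₁0
    rw [hD₁, ht₁]
    nlinarith [mul_pos (mul_pos hk₁ hk₁) (show (0:ℝ) < 1 - a ^ 2 by nlinarith)]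
  have hs₂ : Real.sqrt D₂ < t₂ := by
    rw [show (t₂ : ℝ) = Real.sqrt (t₂ ^ 2) by rw [Real.sqrt_sq ht₂0.le]]
    apply Real.sqrt_lt_sqrt hD₂0
    rw [hD₂, ht₂]
    nlinarith [mul_pos (mul_pos hk₂0 hk₂0) (show (0:ℝ) < 1 - a ^ 2 by nlinarith)]
  -- key: √D₂ * t₁ < √D₁ * t₂
  have hkey : Real.sqrt D₂ * t₁ < Real.sqrt D₁ * t₂ := by
    have h : D₂ * t₁ ^ 2 < D₁ * t₂ ^ 2 := by
      rw [hD₁, hD₂, ht₁, ht₂]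
      have h1a : (0:ℝ) < 1 - a ^ 2 := by nlinarith
      have hss : (0:ℝ) < k₂ ^ 2 - k₁ ^ 2 := by nlinarith
      have h1 : k₁ * k₂ < 1 := by nlinarith
      have hp : (0:ℝ) < 1 - k₁ ^ 2 * k₂ ^ 2 := by
        nlinarith [mul_pos (sub_pos.2 h1) (show (0:ℝ) < 1 + k₁ * k₂ by positivity)]
      nlinarith [mul_pos (mul_pos h1a hss) hp]
    have := Real.sqrt_lt_sqrt (by positivity) h
    rwa [Real.sqrt_mul hD₂0, Real.sqrt_mul hD₁0, Real.sqrt_sq ht₁0.le,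
      Real.sqrt_sq ht₂0.le] at this
  rw [div_lt_div_iff₀ (by linarith) (by linarith)]
  nlinarith [hkey]
end

section
/- Fix a with 0 < a < 1 and define, for k ∈ (0, 1], f(k, a) = (k² + 1 + √((1 − k²)² + 4k²a²)) / (k² + 1 − √((1 − k²)² + 4k²a²)). Then for every k ∈ (0, 1], f(k, a) ≥ f(1, a) = (1 + a)/(1 − a), with equality if and only if k = 1. In other words, for the frame {φ₁, φ₂} = {(k,0), (a,b)} with a² + b² = 1, the condition number is minimized over scalings exactly when the two vectors have equal length, and the minimal condition number is (1 + |⟨φ₁/‖φ₁‖, φ₂⟩|)/(1 − |⟨φ₁/‖φ₁‖, φ₂⟩|). -/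
/-- For fixed 0 < a < 1 and any k ∈ (0,1],
f(k, a) = (k² + 1 + √((1 − k²)² + 4k²a²)) / (k² + 1 − √((1 − k²)² + 4k²a²))
satisfies f(k, a) ≥ (1 + a)/(1 − a) = f(1, a), with equality iff k = 1: the condition
number of the two-vector frame is minimized exactly at equal norms. -/
theorem stmt_9 (a k : ℝ) (ha0 : 0 < a) (ha1 : a < 1) (hk0 : 0 < k) (hk1 : k ≤ 1) :
    ((1 + a) / (1 - a) ≤
      (k ^ 2 + 1 + Real.sqrt ((1 - k ^ 2) ^ 2 + 4 * k ^ 2 * a ^ 2)) /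
        (k ^ 2 + 1 - Real.sqrt ((1 - k ^ 2) ^ 2 + 4 * k ^ 2 * a ^ 2))) ∧
    ((k ^ 2 + 1 + Real.sqrt ((1 - k ^ 2) ^ 2 + 4 * k ^ 2 * a ^ 2)) /
        (k ^ 2 + 1 - Real.sqrt ((1 - k ^ 2) ^ 2 + 4 * k ^ 2 * a ^ 2))
      = (1 + a) / (1 - a) ↔ k = 1) ∧
    (1 ^ 2 + 1 + Real.sqrt ((1 - 1 ^ 2) ^ 2 + 4 * 1 ^ 2 * a ^ 2)) /
        (1 ^ 2 + 1 - Real.sqrt ((1 - 1 ^ 2) ^ 2 + 4 * 1 ^ 2 * a ^ 2))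
      = (1 + a) / (1 - a) := by
  set D : ℝ := (1 - k ^ 2) ^ 2 + 4 * k ^ 2 * a ^ 2 with hD
  have hD0 : 0 ≤ D := by positivity
  set s : ℝ := Real.sqrt D with hs
  have hs0 : 0 ≤ s := Real.sqrt_nonneg _
  have hssq : s ^ 2 = D := Real.sq_sqrt hD0
  -- s < k^2 + 1
  have hslt : s < k ^ 2 + 1 := by
    rw [hs]
    rw [show k ^ 2 + 1 = Real.sqrt ((k ^ 2 + 1) ^ 2) from
      (Real.sqrt_sq (by positivity)).symm]
    apply Real.sqrt_lt_sqrt hD0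
    nlinarith [hD, mul_pos (mul_pos hk0 hk0) (show (0:ℝ) < 1 - a ^ 2 by nlinarith)]
  have hden : 0 < k ^ 2 + 1 - s := by linarith
  have hden2 : 0 < 1 - a := by linarith
  -- key: a * (k^2 + 1) ≤ s
  have hkey : a * (k ^ 2 + 1) ≤ s := by
    rw [hs]
    rw [show a * (k ^ 2 + 1) = Real.sqrt ((a * (k ^ 2 + 1)) ^ 2) from
      (Real.sqrt_sq (by positivity)).symm]
    apply Real.sqrt_le_sqrt
    nlinarith [hD, mul_nonneg (show (0:ℝ) ≤ 1 - a ^ 2 by nlinarith) (sq_nonneg (1 - k ^ 2))]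
  refine ⟨?_, ?_, ?_⟩
  · rw [div_le_div_iff₀ hden2 hden]
    nlinarith [hkey]
  · constructor
    · intro h
      rw [div_eq_div_iff hden.ne' hden2.ne'] at h
      have heq : a * (k ^ 2 + 1) = s := by nlinarith
      have : a ^ 2 * (k ^ 2 + 1) ^ 2 = D := by
        rw [← hssq, ← heq]; ring
      have hk2 : k ^ 2 = 1 := by
        by_contra hne
        have hlt : 0 < 1 - k ^ 2 := lt_of_le_of_ne (by nlinarith) (by
          intro hz; exact hne (by linarith))
        nlinarith [hD, mul_pos (mul_pos hlt hlt) (show (0:ℝ) < 1 - a ^ 2 by nlinarith)]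
      nlinarith
    · intro h
      subst h
      have : Real.sqrt D = 2 * a := by
        rw [hD, show (1 - (1:ℝ) ^ 2) ^ 2 + 4 * 1 ^ 2 * a ^ 2 = (2 * a) ^ 2 by ring,
          Real.sqrt_sq (by positivity)]
      rw [← hs] at this
      rw [this]
      have h2 : ((1:ℝ) ^ 2 + 1 - 2 * a) ≠ 0 := by intro hz; nlinarith
      rw [div_eq_div_iff h2 hden2.ne']
      ring
  · have : Real.sqrt ((1 - (1:ℝ) ^ 2) ^ 2 + 4 * 1 ^ 2 * a ^ 2) = 2 * a := by
      rw [show (1 - (1:ℝ) ^ 2) ^ 2 + 4 * 1 ^ 2 * a ^ 2 = (2 * a) ^ 2 by ring,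
        Real.sqrt_sq (by positivity)]
    have h2 : ((1:ℝ) ^ 2 + 1 - 2 * a) ≠ 0 := by intro hz; nlinarith
    rw [this, div_eq_div_iff h2 hden2.ne']
    ring
end

section
/- Let φ₁, φ₂ ∈ ℝ² be linearly independent with 0 < ‖φ₁‖ < ‖φ₂‖ and ⟨φ₁, φ₂⟩ ≠ 0, and let 0 < ε < 1. For scalars c₁, c₂ ∈ [1 − ε, 1 + ε], let κ(c₁, c₂) denote the condition number (ratio of largest to smallest eigenvalue) of the frame operator of {c₁φ₁, c₂φ₂}. Then: (1) if (1 + ε)‖φ₁‖ ≥ (1 − ε)‖φ₂‖, the minimum of κ over [1 − ε, 1 + ε]² is attained at any (c₁, c₂) with c₁‖φ₁‖ = c₂‖φ₂‖, and equals (1 + t)/(1 − t) where t = |⟨φ₁, φ₂⟩|/(‖φ₁‖‖φ₂‖); (2) if (1 + ε)‖φ₁‖ ≤ (1 − ε)‖φ₂‖, the minimum of κ over [1 − ε, 1 + ε]² is attained at (c₁, c₂) = (1 + ε, 1 − ε). -/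
/-!
The frame operator of `{u, v}` has trace `T = ‖u‖² + ‖v‖²` and determinant
`‖u‖²‖v‖² - ⟪u, v⟫²`, so its condition number is `(T + s) / (T - s)` with `s² = T² - 4 det`.
Scaling `φ₁, φ₂` by `c₁, c₂` leaves `t = |cos ∠(φ₁, φ₂)|` unchanged and only moves
`x = c₁²‖φ₁‖²`, `y = c₂²‖φ₂‖²`; then `(s / T)² = 1 - 4 (1 - t²) x y / (x + y)²`, and
`(T + s) / (T - s)` increases with `s / T`. Hence the condition number is smallest when `x / y`
is as close to `1` as the constraints allow: it equals `(1 + t) / (1 - t)` at `x = y`, and if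
`x ≤ y` for every admissible scaling, the best choice is the largest `c₁` and the smallest `c₂`.
-/

open scoped RealInnerProductSpace BigOperators

/-- The frame operator S(φ) = Σᵢ ⟪φ, ψᵢ⟫ • ψᵢ of a finite family in ℝ². -/
noncomputable def frameOperator {m : ℕ} (ψ : Fin m → EuclideanSpace ℝ (Fin 2)) :
    EuclideanSpace ℝ (Fin 2) →L[ℝ] EuclideanSpace ℝ (Fin 2) :=
  ∑ i, (innerSL ℝ (ψ i)).smulRight (ψ i)

/-- The condition number of an operator: ratio of its largest to smallest eigenvalue. -/
noncomputable def condNum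
    (S : EuclideanSpace ℝ (Fin 2) →L[ℝ] EuclideanSpace ℝ (Fin 2)) : ℝ :=
  sSup (spectrum ℝ S) / sInf (spectrum ℝ S)

noncomputable def frameMatrix {m : ℕ} (ψ : Fin m → EuclideanSpace ℝ (Fin 2)) :
    Matrix (Fin 2) (Fin 2) ℝ :=
  ∑ i, Matrix.vecMulVec (ψ i) (ψ i)

lemma frameOperator_eq_toEuclideanCLM {m : ℕ} (ψ : Fin m → EuclideanSpace ℝ (Fin 2)) :
    frameOperator ψ = Matrix.toEuclideanCLM (𝕜 := ℝ) (frameMatrix ψ) := by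
  ext x j
  simp [frameOperator, frameMatrix, Matrix.vecMulVec_mulVec, PiLp.inner_apply,
    dotProduct, mul_comm]

lemma Matrix.spectrum_fin_two (M : Matrix (Fin 2) (Fin 2) ℝ) {s : ℝ}
    (hs : s ^ 2 = M.trace ^ 2 - 4 * M.det) :
    spectrum ℝ M = {(M.trace - s) / 2, (M.trace + s) / 2} := by
  ext μ
  have hchar :
      (algebraMap ℝ _ μ - M).det = (μ - (M.trace - s) / 2) * (μ - (M.trace + s) / 2) := by
    rw [Matrix.trace_fin_two, Matrix.det_fin_two] at *
    simp only [sub_apply, algebraMap_matrix_apply, ↓reduceIte, Algebra.algebraMap_self,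
      Real.ringHom_apply, zero_ne_one, one_ne_zero, zero_sub, mul_neg, neg_mul, neg_neg]
    linear_combination hs / 4
  rw [spectrum.mem_iff, Matrix.isUnit_iff_isUnit_det, isUnit_iff_ne_zero, not_not, hchar,
    mul_eq_zero, sub_eq_zero, sub_eq_zero]
  rfl

lemma real_inner_fin_two (u v : EuclideanSpace ℝ (Fin 2)) :
    ⟪u, v⟫ = u 0 * v 0 + u 1 * v 1 := by
  simp [PiLp.inner_apply, Fin.sum_univ_two, mul_comm]

lemma norm_sq_fin_two (u : EuclideanSpace ℝ (Fin 2)) : ‖u‖ ^ 2 = u 0 ^ 2 + u 1 ^ 2 := by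
  rw [← real_inner_self_eq_norm_sq, real_inner_fin_two, sq, sq]

lemma trace_frameMatrix_pair (u v : EuclideanSpace ℝ (Fin 2)) :
    (frameMatrix ![u, v]).trace = ‖u‖ ^ 2 + ‖v‖ ^ 2 := by
  simp [frameMatrix, norm_sq_fin_two]
  ring

lemma det_frameMatrix_pair (u v : EuclideanSpace ℝ (Fin 2)) :
    (frameMatrix ![u, v]).det = ‖u‖ ^ 2 * ‖v‖ ^ 2 - ⟪u, v⟫ ^ 2 := by
  simp [frameMatrix, Matrix.det_fin_two, Matrix.vecMulVec_apply, norm_sq_fin_two,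
    real_inner_fin_two]
  ring

lemma condNum_eq_of_spectrum_eq_pair
    {S : EuclideanSpace ℝ (Fin 2) →L[ℝ] EuclideanSpace ℝ (Fin 2)} {a b : ℝ} (hab : a ≤ b)
    (h : spectrum ℝ S = {a, b}) : condNum S = b / a := by
  rw [condNum, h, csSup_pair, csInf_pair, sup_eq_right.2 hab, inf_eq_left.2 hab]

lemma condNum_frameOperator_pair (u v : EuclideanSpace ℝ (Fin 2)) :
    condNum (frameOperator ![u, v]) =
      (‖u‖ ^ 2 + ‖v‖ ^ 2 + √((‖u‖ ^ 2 - ‖v‖ ^ 2) ^ 2 + 4 * ⟪u, v⟫ ^ 2)) /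
        (‖u‖ ^ 2 + ‖v‖ ^ 2 - √((‖u‖ ^ 2 - ‖v‖ ^ 2) ^ 2 + 4 * ⟪u, v⟫ ^ 2)) := by
  set T := ‖u‖ ^ 2 + ‖v‖ ^ 2
  set s := √((‖u‖ ^ 2 - ‖v‖ ^ 2) ^ 2 + 4 * ⟪u, v⟫ ^ 2)
  have hs : s ^ 2 = (frameMatrix ![u, v]).trace ^ 2 - 4 * (frameMatrix ![u, v]).det := by
    rw [Real.sq_sqrt (by positivity), trace_frameMatrix_pair, det_frameMatrix_pair]
    ring
  have hspec : spectrum ℝ (frameOperator ![u, v]) = {(T - s) / 2, (T + s) / 2} := by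
    rw [frameOperator_eq_toEuclideanCLM, AlgEquiv.spectrum_eq, Matrix.spectrum_fin_two _ hs,
      trace_frameMatrix_pair]
  have hs0 : 0 ≤ s := Real.sqrt_nonneg _
  rw [condNum_eq_of_spectrum_eq_pair (by linarith) hspec, div_div_div_cancel_right₀ two_ne_zero]

/-- The condition number of the frame operator of two vectors with squared norms `x`, `y` and
`|cos ∠| = t`, whose eigenvalues are `(x + y ± √((x - y)² + 4 t² x y)) / 2`. -/
noncomputable def pairCond (t x y : ℝ) : ℝ :=
  (x + y + √((x - y) ^ 2 + 4 * t ^ 2 * x * y)) / (x + y - √((x - y) ^ 2 + 4 * t ^ 2 * x * y))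

lemma add_div_sub_le_add_div_sub {T s T' s' : ℝ} (hs : s < T) (hs' : s' < T')
    (h : s * T' ≤ s' * T) : (T + s) / (T - s) ≤ (T' + s') / (T' - s') := by
  rw [div_le_div_iff₀ (by linarith) (by linarith)]
  linarith

lemma sqrt_sq_sub_add_lt_add {t x y : ℝ} (ht1 : t < 1) (ht0 : 0 ≤ t) (hx : 0 < x) (hy : 0 < y) :
    √((x - y) ^ 2 + 4 * t ^ 2 * x * y) < x + y := by
  rw [Real.sqrt_lt' (by linarith)]
  nlinarith [mul_pos hx hy, mul_pos (mul_pos hx hy) (sub_pos.2 ht1)]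

lemma pairCond_self {t x : ℝ} (ht1 : t < 1) (ht0 : 0 ≤ t) (hx : 0 < x) :
    pairCond t x x = (1 + t) / (1 - t) := by
  have h : (x - x) ^ 2 + 4 * t ^ 2 * x * x = (2 * t * x) ^ 2 := by ring
  rw [pairCond, h, Real.sqrt_sq (by positivity),
    div_eq_div_iff (by nlinarith) (by linarith)]
  ring

lemma div_le_pairCond {t x y : ℝ} (ht1 : t < 1) (ht0 : 0 ≤ t) (hx : 0 < x) (hy : 0 < y) :
    (1 + t) / (1 - t) ≤ pairCond t x y := by
  refine add_div_sub_le_add_div_sub ht1 (sqrt_sq_sub_add_lt_add ht1 ht0 hx hy) ?_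
  rw [mul_one, Real.le_sqrt (by positivity) (by positivity)]
  linear_combination
    mul_nonneg (sub_nonneg.2 (pow_le_one₀ (n := 2) ht0 ht1.le)) (sq_nonneg (x - y))

lemma pairCond_le_pairCond {t x y x' y' : ℝ} (ht1 : t < 1) (ht0 : 0 ≤ t) (hx : 0 < x)
    (hx' : 0 < x') (hxy' : x' ≤ y') (hratio : x * y' ≤ x' * y) :
    pairCond t x' y' ≤ pairCond t x y := by
  have hy' : 0 < y' := hx'.trans_le hxy'
  have hy : 0 < y := by nlinarith
  refine add_div_sub_le_add_div_sub (sqrt_sq_sub_add_lt_add ht1 ht0 hx' hy')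
    (sqrt_sq_sub_add_lt_add ht1 ht0 hx hy) ?_
  rw [← sq_le_sq₀ (by positivity) (by positivity), mul_pow, mul_pow,
    Real.sq_sqrt (by positivity), Real.sq_sqrt (by positivity)]
  have hxy : x * x' ≤ y * y' := by nlinarith
  -- `s² T'² - s'² T² = 4 (1 - t²) (x' y - x y') (y y' - x x')`
  linear_combination 4 * mul_nonneg (mul_nonneg (sub_nonneg.2 (pow_le_one₀ (n := 2) ht0 ht1.le))
    (sub_nonneg.2 hratio)) (sub_nonneg.2 hxy)

lemma abs_real_inner_div_norm_mul_norm_lt_one_of_linearIndependent {F : Type*}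
    [NormedAddCommGroup F] [InnerProductSpace ℝ F] {x y : F}
    (h : LinearIndependent ℝ ![x, y]) : |⟪x, y⟫| / (‖x‖ * ‖y‖) < 1 := by
  rw [← abs_of_nonneg (by positivity : 0 ≤ ‖x‖ * ‖y‖), ← abs_div]
  refine (abs_real_inner_div_norm_mul_norm_le_one x y).lt_of_ne fun heq => ?_
  obtain ⟨-, r, hr, rfl⟩ := (abs_real_inner_div_norm_mul_norm_eq_one_iff x y).1 heq
  exact hr (LinearIndependent.pair_iff.1 h r (-1) (by rw [neg_one_smul, add_neg_cancel])).1

lemma condNum_frameOperator_smul_pair {φ₁ φ₂ : EuclideanSpace ℝ (Fin 2)} (h₁ : φ₁ ≠ 0)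
    (h₂ : φ₂ ≠ 0) (c₁ c₂ : ℝ) :
    condNum (frameOperator ![c₁ • φ₁, c₂ • φ₂]) =
      pairCond (|⟪φ₁, φ₂⟫| / (‖φ₁‖ * ‖φ₂‖)) (c₁ ^ 2 * ‖φ₁‖ ^ 2) (c₂ ^ 2 * ‖φ₂‖ ^ 2) := by
  have hdisc : 4 * ⟪c₁ • φ₁, c₂ • φ₂⟫ ^ 2 =
      4 * (|⟪φ₁, φ₂⟫| / (‖φ₁‖ * ‖φ₂‖)) ^ 2 * (c₁ ^ 2 * ‖φ₁‖ ^ 2) * (c₂ ^ 2 * ‖φ₂‖ ^ 2) := by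
    rw [real_inner_smul_left, real_inner_smul_right, div_pow, sq_abs]
    field_simp
  rw [condNum_frameOperator_pair, pairCond, hdisc, norm_smul, norm_smul, mul_pow, mul_pow,
    Real.norm_eq_abs, Real.norm_eq_abs, sq_abs, sq_abs]

theorem stmt_10_general (φ₁ φ₂ : EuclideanSpace ℝ (Fin 2))
    (hind : LinearIndependent ℝ ![φ₁, φ₂])
    (ε : ℝ) (hε1 : ε < 1) :
    ((1 - ε) * ‖φ₂‖ ≤ (1 + ε) * ‖φ₁‖ →
      (∀ c₁ ∈ Set.Icc (1 - ε) (1 + ε), ∀ c₂ ∈ Set.Icc (1 - ε) (1 + ε),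
        (1 + |⟪φ₁, φ₂⟫| / (‖φ₁‖ * ‖φ₂‖)) / (1 - |⟪φ₁, φ₂⟫| / (‖φ₁‖ * ‖φ₂‖))
          ≤ condNum (frameOperator ![c₁ • φ₁, c₂ • φ₂])) ∧
      (∀ c₁ ∈ Set.Icc (1 - ε) (1 + ε), ∀ c₂ ∈ Set.Icc (1 - ε) (1 + ε),
        c₁ * ‖φ₁‖ = c₂ * ‖φ₂‖ →
          condNum (frameOperator ![c₁ • φ₁, c₂ • φ₂]) =
            (1 + |⟪φ₁, φ₂⟫| / (‖φ₁‖ * ‖φ₂‖)) / (1 - |⟪φ₁, φ₂⟫| / (‖φ₁‖ * ‖φ₂‖)))) ∧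
    ((1 + ε) * ‖φ₁‖ ≤ (1 - ε) * ‖φ₂‖ →
      ∀ c₁ ∈ Set.Icc (1 - ε) (1 + ε), ∀ c₂ ∈ Set.Icc (1 - ε) (1 + ε),
        condNum (frameOperator ![(1 + ε) • φ₁, (1 - ε) • φ₂])
          ≤ condNum (frameOperator ![c₁ • φ₁, c₂ • φ₂])) := by
  have h₁ : φ₁ ≠ 0 := by simpa using hind.ne_zero 0
  have h₂ : φ₂ ≠ 0 := by simpa using hind.ne_zero 1
  have hn₁ : 0 < ‖φ₁‖ := norm_pos_iff.2 h₁
  have hn₂ : 0 < ‖φ₂‖ := norm_pos_iff.2 h₂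
  have ht1 := abs_real_inner_div_norm_mul_norm_lt_one_of_linearIndependent hind
  have ht0 : 0 ≤ |⟪φ₁, φ₂⟫| / (‖φ₁‖ * ‖φ₂‖) := by positivity
  have hpos : ∀ c ∈ Set.Icc (1 - ε) (1 + ε), 0 < c := fun c hc => by linarith [hc.1]
  simp only [condNum_frameOperator_smul_pair h₁ h₂]
  refine ⟨fun _ => ⟨fun c₁ hc₁ c₂ hc₂ => ?_, fun c₁ hc₁ c₂ hc₂ heq => ?_⟩,
    fun hle c₁ hc₁ c₂ hc₂ => ?_⟩
  · have := hpos c₁ hc₁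
    have := hpos c₂ hc₂
    exact div_le_pairCond ht1 ht0 (by positivity) (by positivity)
  · have := hpos c₁ hc₁
    rw [← mul_pow, ← mul_pow, ← heq, mul_pow]
    exact pairCond_self ht1 ht0 (by positivity)
  · have := hpos c₁ hc₁
    have := hpos c₂ hc₂
    have : 0 < 1 - ε := by linarith
    have : 0 < 1 + ε := by linarith [hc₁.1, hc₁.2]
    apply pairCond_le_pairCond ht1 ht0 (by positivity) (by positivity)
    · rw [← mul_pow, ← mul_pow]
      exact pow_le_pow_left₀ (by positivity) hle 2
    · calc c₁ ^ 2 * ‖φ₁‖ ^ 2 * ((1 - ε) ^ 2 * ‖φ₂‖ ^ 2)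
          = (c₁ * (1 - ε)) ^ 2 * (‖φ₁‖ ^ 2 * ‖φ₂‖ ^ 2) := by ring
        _ ≤ ((1 + ε) * c₂) ^ 2 * (‖φ₁‖ ^ 2 * ‖φ₂‖ ^ 2) := by gcongr <;> linarith [hc₁.2, hc₂.1]
        _ = (1 + ε) ^ 2 * ‖φ₁‖ ^ 2 * (c₂ ^ 2 * ‖φ₂‖ ^ 2) := by ring

/-- Restricted scaling of a two-vector frame: with scalars confined to [1−ε, 1+ε], if the
norms can be equalized, any equalizing scaling minimizes the condition number, giving
(1+t)/(1−t) with t the normalized inner product; otherwise (1+ε, 1−ε) is optimal. -/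
theorem stmt_10 (φ₁ φ₂ : EuclideanSpace ℝ (Fin 2))
    (hind : LinearIndependent ℝ ![φ₁, φ₂])
    (h0 : 0 < ‖φ₁‖) (hlt : ‖φ₁‖ < ‖φ₂‖) (hip : ⟪φ₁, φ₂⟫ ≠ 0)
    (ε : ℝ) (hε0 : 0 < ε) (hε1 : ε < 1) :
    ((1 - ε) * ‖φ₂‖ ≤ (1 + ε) * ‖φ₁‖ →
      (∀ c₁ ∈ Set.Icc (1 - ε) (1 + ε), ∀ c₂ ∈ Set.Icc (1 - ε) (1 + ε),
        (1 + |⟪φ₁, φ₂⟫| / (‖φ₁‖ * ‖φ₂‖)) / (1 - |⟪φ₁, φ₂⟫| / (‖φ₁‖ * ‖φ₂‖))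
          ≤ condNum (frameOperator ![c₁ • φ₁, c₂ • φ₂])) ∧
      (∀ c₁ ∈ Set.Icc (1 - ε) (1 + ε), ∀ c₂ ∈ Set.Icc (1 - ε) (1 + ε),
        c₁ * ‖φ₁‖ = c₂ * ‖φ₂‖ →
          condNum (frameOperator ![c₁ • φ₁, c₂ • φ₂]) =
            (1 + |⟪φ₁, φ₂⟫| / (‖φ₁‖ * ‖φ₂‖)) / (1 - |⟪φ₁, φ₂⟫| / (‖φ₁‖ * ‖φ₂‖)))) ∧
    ((1 + ε) * ‖φ₁‖ ≤ (1 - ε) * ‖φ₂‖ →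
      ∀ c₁ ∈ Set.Icc (1 - ε) (1 + ε), ∀ c₂ ∈ Set.Icc (1 - ε) (1 + ε),
        condNum (frameOperator ![(1 + ε) • φ₁, (1 - ε) • φ₂])
          ≤ condNum (frameOperator ![c₁ • φ₁, c₂ • φ₂])) :=
  stmt_10_general φ₁ φ₂ hind ε hε1
end

section
/- Let φ₁, φ₂, φ₃ be nonzero vectors in ℝ² such that ⟨φ₁, φ₃⟩ < 0 and ⟨φ₁, φ₂⟩·⟨φ₂, φ₃⟩ > 0. Then {φ₁, φ₂, φ₃} is scalable: there exist positive scalars c₁, c₂, c₃ such that {c₁φ₁, c₂φ₂, c₃φ₃} is a Parseval frame, i.e. Σ_{i=1}^3 ⟨φ, c_iφ_i⟩ c_iφ_i = φ for all φ ∈ ℝ². -/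
/-!
Write `dᵢⱼ = cross φᵢ φⱼ` for the determinant of `(φᵢ, φⱼ)`. Cramer's rule gives weights
`w₁ = ⟪φ₂, φ₃⟫ / (d₁₂ d₁₃)`, `w₂ = -⟪φ₁, φ₃⟫ / (d₁₂ d₂₃)`, `w₃ = ⟪φ₁, φ₂⟫ / (d₁₃ d₂₃)`
with `∑ wᵢ ⟪φ, φᵢ⟫ φᵢ = φ`, and the scalars are `cᵢ = √wᵢ`. The weights are positive by the
two-dimensional Binet–Cauchy identity `d₁₂ d₁₃ = ‖φ₁‖² ⟪φ₂, φ₃⟫ - ⟪φ₁, φ₂⟫ ⟪φ₁, φ₃⟫`: it gives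
`⟪φ₂, φ₃⟫ d₁₂ d₁₃ = ‖φ₁‖² ⟪φ₂, φ₃⟫² - ⟪φ₁, φ₂⟫ ⟪φ₁, φ₃⟫ ⟪φ₂, φ₃⟫`, and the hypotheses make the
triple product `⟪φ₁, φ₂⟫ ⟪φ₁, φ₃⟫ ⟪φ₂, φ₃⟫` negative.
-/

open scoped RealInnerProductSpace

local notation "ℝ²" => EuclideanSpace ℝ (Fin 2)

def cross (x y : ℝ²) : ℝ := x 0 * y 1 - x 1 * y 0

lemma cross_swap (x y : ℝ²) : cross y x = -cross x y := by
  unfold cross; ring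

lemma inner_eq_fin_two (x y : ℝ²) : ⟪x, y⟫ = x 0 * y 0 + x 1 * y 1 := by
  simp [PiLp.inner_apply, Fin.sum_univ_two, mul_comm]

lemma inner_mul_inner_add_cross_mul_cross (u v w : ℝ²) :
    ⟪u, v⟫ * ⟪u, w⟫ + cross u v * cross u w = ⟪u, u⟫ * ⟪v, w⟫ := by
  simp only [inner_eq_fin_two, cross]; ring

lemma cross_mul_cross_mul_cross_smul (φ₁ φ₂ φ₃ φ : ℝ²) :
    (cross φ₁ φ₂ * cross φ₁ φ₃ * cross φ₂ φ₃) • φ =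
      (⟪φ₂, φ₃⟫ * cross φ₂ φ₃ * ⟪φ, φ₁⟫) • φ₁ + (-⟪φ₁, φ₃⟫ * cross φ₁ φ₃ * ⟪φ, φ₂⟫) • φ₂
        + (⟪φ₁, φ₂⟫ * cross φ₁ φ₂ * ⟪φ, φ₃⟫) • φ₃ := by
  ext i
  fin_cases i <;>
    simp only [cross, inner_eq_fin_two, PiLp.add_apply, PiLp.smul_apply, smul_eq_mul,
      Fin.isValue, Fin.zero_eta, Fin.mk_one] <;>
    ring

lemma inner_mul_cross_mul_cross_pos {u v w : ℝ²} (h : ⟪u, v⟫ * ⟪u, w⟫ * ⟪v, w⟫ < 0) :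
    0 < ⟪v, w⟫ * (cross u v * cross u w) := by
  have hsq : 0 ≤ ⟪u, u⟫ * ⟪v, w⟫ ^ 2 := mul_nonneg real_inner_self_nonneg (sq_nonneg _)
  calc 0 < ⟪u, u⟫ * ⟪v, w⟫ ^ 2 - ⟪u, v⟫ * ⟪u, w⟫ * ⟪v, w⟫ := by linarith
    _ = ⟪v, w⟫ * (cross u v * cross u w) := by
      linear_combination -⟪v, w⟫ * inner_mul_inner_add_cross_mul_cross u v w

lemma inner_smul_smul_self {E : Type*} [NormedAddCommGroup E] [InnerProductSpace ℝ E]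
    (c : ℝ) (φ ψ : E) : ⟪φ, c • ψ⟫ • (c • ψ) = (c ^ 2 * ⟪φ, ψ⟫) • ψ := by
  rw [real_inner_smul_right, smul_smul]
  ring_nf

lemma exists_pos_weights_parseval (φ₁ φ₂ φ₃ : ℝ²)
    (h : ⟪φ₁, φ₂⟫ * ⟪φ₁, φ₃⟫ * ⟪φ₂, φ₃⟫ < 0) :
    ∃ w₁ w₂ w₃ : ℝ, 0 < w₁ ∧ 0 < w₂ ∧ 0 < w₃ ∧ ∀ φ : ℝ²,
      (w₁ * ⟪φ, φ₁⟫) • φ₁ + (w₂ * ⟪φ, φ₂⟫) • φ₂ + (w₃ * ⟪φ, φ₃⟫) • φ₃ = φ := by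
  have h₁ : 0 < ⟪φ₂, φ₃⟫ * (cross φ₁ φ₂ * cross φ₁ φ₃) :=
    inner_mul_cross_mul_cross_pos h
  have h₂ : 0 < ⟪φ₁, φ₃⟫ * (cross φ₂ φ₁ * cross φ₂ φ₃) :=
    inner_mul_cross_mul_cross_pos (by rw [real_inner_comm φ₁ φ₂]; linarith)
  have h₃ : 0 < ⟪φ₁, φ₂⟫ * (cross φ₃ φ₁ * cross φ₃ φ₂) :=
    inner_mul_cross_mul_cross_pos (by rw [real_inner_comm φ₁ φ₃, real_inner_comm φ₂ φ₃]; linarith)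
  rw [cross_swap φ₁ φ₂] at h₂
  rw [cross_swap φ₁ φ₃, cross_swap φ₂ φ₃] at h₃
  have hd₁₂ : cross φ₁ φ₂ ≠ 0 := by rintro h0; simp [h0] at h₁
  have hd₁₃ : cross φ₁ φ₃ ≠ 0 := by rintro h0; simp [h0] at h₁
  have hd₂₃ : cross φ₂ φ₃ ≠ 0 := by rintro h0; simp [h0] at h₂
  set D := cross φ₁ φ₂ * cross φ₁ φ₃ * cross φ₂ φ₃
  have hD : D ≠ 0 := by positivity
  have weight_pos : ∀ a, 0 < a * D → 0 < a / D := fun a ha =>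
    div_pos_iff.2 (pos_and_pos_or_neg_and_neg_of_mul_pos ha)
  refine ⟨⟪φ₂, φ₃⟫ * cross φ₂ φ₃ / D, -⟪φ₁, φ₃⟫ * cross φ₁ φ₃ / D,
    ⟪φ₁, φ₂⟫ * cross φ₁ φ₂ / D, weight_pos _ ?_, weight_pos _ ?_, weight_pos _ ?_, fun φ => ?_⟩
  · linear_combination mul_pos h₁ (by positivity : 0 < cross φ₂ φ₃ ^ 2)
  · linear_combination mul_pos h₂ (by positivity : 0 < cross φ₁ φ₃ ^ 2)
  · linear_combination mul_pos h₃ (by positivity : 0 < cross φ₁ φ₂ ^ 2)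
  · apply smul_right_injective _ hD
    simp only [smul_add, smul_smul]
    rw [cross_mul_cross_mul_cross_smul]
    congr 2 <;> field_simp

theorem stmt_11_general (φ₁ φ₂ φ₃ : EuclideanSpace ℝ (Fin 2))
    (h13 : ⟪φ₁, φ₃⟫ < 0) (h123 : 0 < ⟪φ₁, φ₂⟫ * ⟪φ₂, φ₃⟫) :
    ∃ c₁ c₂ c₃ : ℝ, 0 < c₁ ∧ 0 < c₂ ∧ 0 < c₃ ∧
      ∀ φ : EuclideanSpace ℝ (Fin 2),
        ⟪φ, c₁ • φ₁⟫ • (c₁ • φ₁) + ⟪φ, c₂ • φ₂⟫ • (c₂ • φ₂) + ⟪φ, c₃ • φ₃⟫ • (c₃ • φ₃)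
          = φ := by
  obtain ⟨w₁, w₂, w₃, hw₁, hw₂, hw₃, hframe⟩ :=
    exists_pos_weights_parseval φ₁ φ₂ φ₃ (by linear_combination mul_neg_of_neg_of_pos h13 h123)
  refine ⟨√w₁, √w₂, √w₃, by positivity, by positivity, by positivity, fun φ => ?_⟩
  simp only [inner_smul_smul_self, Real.sq_sqrt hw₁.le, Real.sq_sqrt hw₂.le, Real.sq_sqrt hw₃.le]
  exact hframe φ

/-- Three nonzero vectors in ℝ² with ⟪φ₁, φ₃⟫ < 0 and ⟪φ₁, φ₂⟫⟪φ₂, φ₃⟫ > 0 (i.e. not lying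
in a quadrant up to signs) are scalable: some positive scalars make them a Parseval frame. -/
theorem stmt_11 (φ₁ φ₂ φ₃ : EuclideanSpace ℝ (Fin 2))
    (h₁ : φ₁ ≠ 0) (h₂ : φ₂ ≠ 0) (h₃ : φ₃ ≠ 0)
    (h13 : ⟪φ₁, φ₃⟫ < 0) (h123 : 0 < ⟪φ₁, φ₂⟫ * ⟪φ₂, φ₃⟫) :
    ∃ c₁ c₂ c₃ : ℝ, 0 < c₁ ∧ 0 < c₂ ∧ 0 < c₃ ∧
      ∀ φ : EuclideanSpace ℝ (Fin 2),
        ⟪φ, c₁ • φ₁⟫ • (c₁ • φ₁) + ⟪φ, c₂ • φ₂⟫ • (c₂ • φ₂) + ⟪φ, c₃ • φ₃⟫ • (c₃ • φ₃)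
          = φ :=
  stmt_11_general φ₁ φ₂ φ₃ h13 h123
end

section
/- Let {φ_i}_{i=1}^m be vectors in ℝ² and suppose there exist three indices i, j, k such that φ_i, φ_j, φ_k are nonzero, ⟨φ_i, φ_k⟩ < 0, and ⟨φ_i, φ_j⟩·⟨φ_j, φ_k⟩ > 0. Then there exist nonnegative scalars c₁, …, c_m, positive exactly on the indices i, j, k and zero elsewhere, such that {c_l φ_l}_{l=1}^m is a tight frame for ℝ². -/
open scoped RealInnerProductSpace BigOperators

/-!
Identify ℝ² with ℂ. Since `2⟪v, u⟫² = ‖v‖²‖u‖² + ⟪v², u²⟫`, the weighted family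
`∑ w_l ⟪v, φ_l⟫²` is a multiple of `‖v‖²` as soon as `∑ w_l φ_l² = 0`, so it suffices to find
a positive linear relation between the squares `x², y², z²` of the three vectors. Cramer's rule
gives one with coefficients the minors `cross y² z²`, `cross z² x²`, `cross x² y²`, and
`cross u² w² = 2⟪u, w⟫ cross u w`; the sign hypotheses force these three numbers, multiplied by
`cross x z`, to be positive. The frame coefficients are then the square roots of the weights.
-/

local notation "ℝ²" => EuclideanSpace ℝ (Fin 2)

namespace EuclideanSpace

lemma inner_fin_two (u w : ℝ²) : ⟪u, w⟫ = u 0 * w 0 + u 1 * w 1 := by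
  simp [PiLp.inner_apply, Fin.sum_univ_two]
  ring

lemma norm_sq_fin_two (u : ℝ²) : ‖u‖ ^ 2 = u 0 ^ 2 + u 1 ^ 2 := by
  rw [← real_inner_self_eq_norm_sq, inner_fin_two]
  ring

def cross (u w : ℝ²) : ℝ := u 0 * w 1 - u 1 * w 0

/-- The square of `u 0 + u 1 * I` in ℂ, read back in ℝ²: it doubles angles. -/
def complexSq (u : ℝ²) : ℝ² := !₂[u 0 ^ 2 - u 1 ^ 2, 2 * u 0 * u 1]

@[simp] lemma complexSq_apply_zero (u : ℝ²) : complexSq u 0 = u 0 ^ 2 - u 1 ^ 2 := rfl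

@[simp] lemma complexSq_apply_one (u : ℝ²) : complexSq u 1 = 2 * u 0 * u 1 := rfl

lemma two_mul_inner_sq (v u : ℝ²) :
    2 * ⟪v, u⟫ ^ 2 = ‖v‖ ^ 2 * ‖u‖ ^ 2 + ⟪complexSq v, complexSq u⟫ := by
  simp only [inner_fin_two, norm_sq_fin_two, complexSq_apply_zero, complexSq_apply_one]
  ring

lemma sum_mul_inner_sq_of_sum_smul_complexSq_eq_zero {ι : Type*} [Fintype ι] (w : ι → ℝ)
    (φ : ι → ℝ²) (h : ∑ l, w l • complexSq (φ l) = 0) (v : ℝ²) :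
    ∑ l, w l * ⟪v, φ l⟫ ^ 2 = (∑ l, w l * ‖φ l‖ ^ 2) / 2 * ‖v‖ ^ 2 := by
  have key : ∑ l, w l * (2 * ⟪v, φ l⟫ ^ 2)
      = (∑ l, w l * ‖φ l‖ ^ 2) * ‖v‖ ^ 2 + ⟪complexSq v, ∑ l, w l • complexSq (φ l)⟫ := by
    simp only [two_mul_inner_sq, mul_add, Finset.sum_add_distrib, Finset.sum_mul,
      inner_sum, real_inner_smul_right]
    congr 1
    exact Finset.sum_congr rfl fun l _ => by ring
  rw [h, inner_zero_right, add_zero] at key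
  simp only [mul_left_comm _ (2 : ℝ), ← Finset.mul_sum] at key
  linarith

lemma cross_complexSq (u w : ℝ²) :
    cross (complexSq u) (complexSq w) = 2 * ⟪u, w⟫ * cross u w := by
  simp only [cross, inner_fin_two, complexSq_apply_zero, complexSq_apply_one]
  ring

lemma cross_smul_add_cross_smul_add_cross_smul (a b c : ℝ²) :
    cross b c • a + cross c a • b + cross a b • c = 0 := by
  ext i
  fin_cases i <;> (simp [cross]; ring)

/- The next two identities are the real and imaginary parts of
`(conj x * y) * (conj y * z) = |y|² * (conj x * z)` in ℂ. -/
lemma inner_mul_inner_sub_cross_mul_cross (x y z : ℝ²) :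
    ⟪x, y⟫ * ⟪y, z⟫ - cross x y * cross y z = ‖y‖ ^ 2 * ⟪x, z⟫ := by
  simp only [cross, inner_fin_two, norm_sq_fin_two]
  ring

lemma inner_mul_cross_add_cross_mul_inner (x y z : ℝ²) :
    ⟪x, y⟫ * cross y z + cross x y * ⟪y, z⟫ = ‖y‖ ^ 2 * cross x z := by
  simp only [cross, inner_fin_two, norm_sq_fin_two]
  ring

lemma inner_mul_cross_mul_cross_pos (x y z : ℝ²) (hxz : ⟪x, z⟫ < 0)
    (hxyz : 0 < ⟪x, y⟫ * ⟪y, z⟫) :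
    0 < ⟪x, y⟫ * cross x y * cross x z ∧ 0 < ⟪y, z⟫ * cross y z * cross x z := by
  have e₁ := inner_mul_inner_sub_cross_mul_cross x y z
  have e₂ := inner_mul_cross_add_cross_mul_inner x y z
  set a := ⟪x, y⟫; set b := cross x y; set c := ⟪y, z⟫; set e := cross y z
  set n := ‖y‖ ^ 2; set d := cross x z
  have hn : 0 ≤ n := by positivity
  have hbe : 0 < b * e := by nlinarith [mul_nonpos_of_nonneg_of_nonpos hn hxz.le]
  -- `a * e` and `b * c` have positive product and sum `n * d`, so both have the sign of `d`.
  have hprod : 0 < (a * e) * (b * c) := by nlinarith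
  have hae : 0 < a * e * (n * d) := by rw [← e₂]; nlinarith [sq_nonneg (a * e)]
  have hbc : 0 < b * c * (n * d) := by rw [← e₂]; nlinarith [sq_nonneg (b * c)]
  constructor
  · by_contra! h
    nlinarith [mul_pos hae hbe, mul_nonneg (mul_nonneg hn (sq_nonneg e)) (neg_nonneg.2 h)]
  · by_contra! h
    nlinarith [mul_pos hbc hbe, mul_nonneg (mul_nonneg hn (sq_nonneg b)) (neg_nonneg.2 h)]

lemma exists_pos_smul_complexSq_add_eq_zero (x y z : ℝ²) (hxz : ⟪x, z⟫ < 0)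
    (hxyz : 0 < ⟪x, y⟫ * ⟪y, z⟫) :
    ∃ p q r : ℝ, 0 < p ∧ 0 < q ∧ 0 < r ∧
      p • complexSq x + q • complexSq y + r • complexSq z = 0 := by
  obtain ⟨hr, hp⟩ := inner_mul_cross_mul_cross_pos x y z hxz hxyz
  have hd : cross x z ≠ 0 := by rintro hd; simp [hd] at hp
  refine ⟨cross (complexSq y) (complexSq z) * cross x z,
    cross (complexSq z) (complexSq x) * cross x z,
    cross (complexSq x) (complexSq y) * cross x z, ?_, ?_, ?_, ?_⟩
  · rw [cross_complexSq]; linarith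
  · have hzx : cross z x = -cross x z := by simp only [cross]; ring
    rw [cross_complexSq, real_inner_comm, hzx]
    nlinarith [sq_pos_of_ne_zero hd]
  · rw [cross_complexSq]; linarith
  · simp only [mul_comm _ (cross x z), mul_smul, ← smul_add,
      cross_smul_add_cross_smul_add_cross_smul, smul_zero]

end EuclideanSpace

lemma Finset.sum_pi_single_add_pi_single_add_pi_single_smul {ι R M : Type*} [Fintype ι]
    [DecidableEq ι] [Semiring R] [AddCommMonoid M] [Module R M] (f : ι → M) (i j k : ι)
    (p q r : R) :
    ∑ l, (Pi.single i p + Pi.single j q + Pi.single k r : ι → R) l • f l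
      = p • f i + q • f j + r • f k := by
  simp [add_smul, Finset.sum_add_distrib, Pi.single_apply, ite_smul]

open EuclideanSpace

theorem stmt_12_general (m : ℕ) (φ : Fin m → EuclideanSpace ℝ (Fin 2)) (i j k : Fin m)
    (hij : i ≠ j) (hjk : j ≠ k) (hik : i ≠ k)
    (hi : φ i ≠ 0)
    (h1 : ⟪φ i, φ k⟫ < 0) (h2 : 0 < ⟪φ i, φ j⟫ * ⟪φ j, φ k⟫) :
    ∃ c : Fin m → ℝ, (∀ l, 0 ≤ c l) ∧ 0 < c i ∧ 0 < c j ∧ 0 < c k ∧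
      (∀ l, l ≠ i → l ≠ j → l ≠ k → c l = 0) ∧
      ∃ A : ℝ, 0 < A ∧
        ∀ v : EuclideanSpace ℝ (Fin 2), ∑ l, ⟪v, c l • φ l⟫ ^ 2 = A * ‖v‖ ^ 2 := by
  obtain ⟨p, q, r, hp, hq, hr, hpqr⟩ := exists_pos_smul_complexSq_add_eq_zero _ _ _ h1 h2
  set w : Fin m → ℝ := Pi.single i p + Pi.single j q + Pi.single k r
  have hw : ∀ l, 0 ≤ w l := fun l => by
    simp only [w, Pi.add_apply, Pi.single_apply]; split_ifs <;> positivity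
  have hsum := Finset.sum_pi_single_add_pi_single_add_pi_single_smul
    (fun l => complexSq (φ l)) i j k p q r
  have hnorm := Finset.sum_pi_single_add_pi_single_add_pi_single_smul
    (fun l => ‖φ l‖ ^ 2) i j k p q r
  refine ⟨fun l => √(w l), fun l => Real.sqrt_nonneg _, ?_, ?_, ?_, ?_,
    (∑ l, w l * ‖φ l‖ ^ 2) / 2, ?_, fun v => ?_⟩
  · simp [w, hij, hik, hp]
  · simp [w, hij.symm, hjk, hq]
  · simp [w, hik.symm, hjk.symm, hr]
  · intro l hli hlj hlk; simp [w, hli, hlj, hlk]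
  · simp only [smul_eq_mul] at hnorm
    have := norm_pos_iff.2 hi
    rw [hnorm]
    positivity
  · simp only [real_inner_smul_right, mul_pow, Real.sq_sqrt (hw _)]
    exact sum_mul_inner_sq_of_sum_smul_complexSq_eq_zero w φ (hsum.trans hpqr) v

/-- If among m vectors in ℝ² there are three nonzero vectors φᵢ, φⱼ, φₖ with ⟪φᵢ, φₖ⟫ < 0
and ⟪φᵢ, φⱼ⟫⟪φⱼ, φₖ⟫ > 0, then scaling those three positively and the rest to zero
yields a tight frame. -/
theorem stmt_12 (m : ℕ) (φ : Fin m → EuclideanSpace ℝ (Fin 2)) (i j k : Fin m)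
    (hij : i ≠ j) (hjk : j ≠ k) (hik : i ≠ k)
    (hi : φ i ≠ 0) (hj : φ j ≠ 0) (hk : φ k ≠ 0)
    (h1 : ⟪φ i, φ k⟫ < 0) (h2 : 0 < ⟪φ i, φ j⟫ * ⟪φ j, φ k⟫) :
    ∃ c : Fin m → ℝ, (∀ l, 0 ≤ c l) ∧ 0 < c i ∧ 0 < c j ∧ 0 < c k ∧
      (∀ l, l ≠ i → l ≠ j → l ≠ k → c l = 0) ∧
      ∃ A : ℝ, 0 < A ∧
        ∀ v : EuclideanSpace ℝ (Fin 2), ∑ l, ⟪v, c l • φ l⟫ ^ 2 = A * ‖v‖ ^ 2 :=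
  stmt_12_general m φ i j k hij hjk hik hi h1 h2
end

section
/- Let b > 0 and c ≥ 0, and define h(a) = ((a + b) + √((a − b)² + 4c)) / ((a + b) − √((a − b)² + 4c)) for a with a·b > c. Then h is strictly increasing on [b + 2c/b, ∞): for all a₁, a₂ with b + 2c/b ≤ a₁ < a₂ one has h(a₁) < h(a₂). Consequently, for a frame in the first quadrant of ℝ², adding a vector interior to the two outer vectors (which increases a = Σφ_{i,1}² past the critical value while fixing b and c) increases the condition number, and the increase grows with the length of the added vector. -/
set_option maxHeartbeats 1000000


/-- For b > 0, c ≥ 0, the condition number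
h(a) = ((a+b) + √((a−b)² + 4c)) / ((a+b) − √((a−b)² + 4c))
is strictly increasing in a on [b + 2c/b, ∞): adding a vector interior to the outer
vectors of a first-quadrant frame increases the condition number. -/
theorem stmt_15 (b c a₁ a₂ : ℝ) (hb : 0 < b) (hc : 0 ≤ c)
    (h1 : b + 2 * c / b ≤ a₁) (h12 : a₁ < a₂) :
    ((a₁ + b) + Real.sqrt ((a₁ - b) ^ 2 + 4 * c)) /
        ((a₁ + b) - Real.sqrt ((a₁ - b) ^ 2 + 4 * c)) <
      ((a₂ + b) + Real.sqrt ((a₂ - b) ^ 2 + 4 * c)) /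
        ((a₂ + b) - Real.sqrt ((a₂ - b) ^ 2 + 4 * c)) := by
  have hcb : 2 * c / b * b = 2 * c := div_mul_cancel₀ _ hb.ne'
  have ht1 : b * a₁ ≥ b * b + 2 * c := by nlinarith [mul_le_mul_of_nonneg_left h1 hb.le]
  set s₁ := Real.sqrt ((a₁ - b) ^ 2 + 4 * c) with hs₁
  set s₂ := Real.sqrt ((a₂ - b) ^ 2 + 4 * c) with hs₂
  have hnn1 : (0:ℝ) ≤ (a₁ - b) ^ 2 + 4 * c := by positivity
  have hnn2 : (0:ℝ) ≤ (a₂ - b) ^ 2 + 4 * c := by positivity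
  have hsq1 : s₁ ^ 2 = (a₁ - b) ^ 2 + 4 * c := Real.sq_sqrt hnn1
  have hsq2 : s₂ ^ 2 = (a₂ - b) ^ 2 + 4 * c := Real.sq_sqrt hnn2
  have hs1nn : 0 ≤ s₁ := Real.sqrt_nonneg _
  have hs2nn : 0 ≤ s₂ := Real.sqrt_nonneg _
  have ha1b : b ≤ a₁ := by nlinarith
  have hd1 : 0 < (a₁ + b) - s₁ := by
    have : s₁ < a₁ + b := by
      rw [hs₁]
      have : Real.sqrt ((a₁ - b) ^ 2 + 4 * c) < Real.sqrt ((a₁ + b) ^ 2) := by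
        apply Real.sqrt_lt_sqrt hnn1
        nlinarith
      rwa [Real.sqrt_sq (by nlinarith)] at this
    linarith
  have hd2 : 0 < (a₂ + b) - s₂ := by
    have : s₂ < a₂ + b := by
      rw [hs₂]
      have : Real.sqrt ((a₂ - b) ^ 2 + 4 * c) < Real.sqrt ((a₂ + b) ^ 2) := by
        apply Real.sqrt_lt_sqrt hnn2
        nlinarith
      rwa [Real.sqrt_sq (by nlinarith)] at this
    linarith
  rw [div_lt_div_iff₀ hd1 hd2]
  -- reduces to s₁ * (a₂ + b) < s₂ * (a₁ + b)
  have key : s₁ * (a₂ + b) < s₂ * (a₁ + b) := by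
    have hD : s₂ ^ 2 * (a₁ + b) ^ 2 - s₁ ^ 2 * (a₂ + b) ^ 2 =
        4 * (a₂ - a₁) * (b * (a₁ * a₂ - b ^ 2) - c * (a₁ + a₂ + 2 * b)) := by
      rw [hsq1, hsq2]; ring
    have ha2b : b < a₂ := lt_of_le_of_lt ha1b h12
    have hkey : 0 < b * (a₁ * a₂ - b ^ 2) - c * (a₁ + a₂ + 2 * b) := by
      nlinarith [mul_le_mul_of_nonneg_right ht1 (by linarith : (0:ℝ) ≤ a₂),
        mul_pos (mul_pos hb hb) (sub_pos.mpr ha2b),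
        mul_nonneg hc (by linarith : (0:ℝ) ≤ a₂ - a₁)]
    have hs2pos : 0 < s₂ := Real.sqrt_pos.mpr (by nlinarith)
    have h4 : 0 < 4 * (a₂ - a₁) * (b * (a₁ * a₂ - b ^ 2) - c * (a₁ + a₂ + 2 * b)) := by
      have := mul_pos (sub_pos.mpr h12) hkey
      linarith
    have hsqlt : (s₁ * (a₂ + b)) ^ 2 < (s₂ * (a₁ + b)) ^ 2 := by
      have e1 : (s₁ * (a₂ + b)) ^ 2 = s₁ ^ 2 * (a₂ + b) ^ 2 := by ring
      have e2 : (s₂ * (a₁ + b)) ^ 2 = s₂ ^ 2 * (a₁ + b) ^ 2 := by ring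
      linarith
    exact lt_of_pow_lt_pow_left₀ 2 (mul_nonneg hs2nn (by linarith)) hsqlt
  nlinarith [key]
end
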